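/- arXiv:2404.05529 — 2 statements merged into one kernel-verified Lean document; each statement's English description precedes it below -/
import Mathlib

section
/- For any finite simple graph G with m edges, the second Zagreb coindex satisfies \overline{M_2}(G) = 2m^2 - \frac{1}{2} M_1(G) - M_2(G). -/
open scoped Classical
open Finset

noncomputable section

namespace Zagreb

variable {V : Type*}

/-- First Zagreb index. -/
def M1 (G : SimpleGraph V) [Fintype V] : ℕ :=
  ∑ v, (G.degree v) ^ 2

/-- Second Zagreb index. -/
def M2 (G : SimpleGraph V) [Fintype V] : ℕ :=
  ∑ e ∈ G.edgeFinset,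
    Sym2.lift ⟨fun u v => G.degree u * G.degree v, fun _ _ => mul_comm _ _⟩ e

/-- First Zagreb coindex: sum over unordered pairs of distinct non-adjacent vertices. -/
def M1bar (G : SimpleGraph V) [Fintype V] : ℕ :=
  ∑ e ∈ Gᶜ.edgeFinset,
    Sym2.lift ⟨fun u v => G.degree u + G.degree v, fun _ _ => add_comm _ _⟩ e

/-- Second Zagreb coindex. -/
def M2bar (G : SimpleGraph V) [Fintype V] : ℕ :=
  ∑ e ∈ Gᶜ.edgeFinset,
    Sym2.lift ⟨fun u v => G.degree u * G.degree v, fun _ _ => mul_comm _ _⟩ e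

/-- The cycle-star graph: a cycle of length `k` together with `l` leaves
attached to the cycle vertex `0`. -/
def cycleStar (k l : ℕ) : SimpleGraph (Fin k ⊕ Fin l) where
  Adj x y :=
    match x, y with
    | Sum.inl i, Sum.inl j => i ≠ j ∧ ((i.val + 1) % k = j.val ∨ (j.val + 1) % k = i.val)
    | Sum.inl i, Sum.inr _ => i.val = 0
    | Sum.inr _, Sum.inl i => i.val = 0
    | Sum.inr _, Sum.inr _ => False
  symm := by
    constructor
    rintro (i | a) (j | b) h
    · exact ⟨Ne.symm h.1, h.2.symm⟩
    · exact h
    · exact h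
    · exact h
  loopless := by
    constructor
    rintro (i | a) h
    · exact h.1 rfl
    · exact h

/-- The subdivision graph: each edge is replaced by a path of length 2. -/
def subdivision (G : SimpleGraph V) : SimpleGraph (V ⊕ G.edgeSet) where
  Adj x y :=
    match x, y with
    | Sum.inl v, Sum.inr e => v ∈ (e : Sym2 V)
    | Sum.inr e, Sum.inl v => v ∈ (e : Sym2 V)
    | _, _ => False
  symm := by constructor; rintro (v | e) (w | f) h <;> simp_all
  loopless := by constructor; rintro (v | e) h <;> simp_all

/-- The line graph of `G`. -/
def lineGraph (G : SimpleGraph V) : SimpleGraph G.edgeSet where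
  Adj e f := e ≠ f ∧ ∃ v, v ∈ (e : Sym2 V) ∧ v ∈ (f : Sym2 V)
  symm := by
    constructor
    rintro e f ⟨hne, v, hv1, hv2⟩
    exact ⟨hne.symm, v, hv2, hv1⟩
  loopless := by constructor; rintro e ⟨hne, _⟩; exact hne rfl

/-- A cut-vertex: a vertex of a connected graph whose removal disconnects it. -/
def IsCutVertex (G : SimpleGraph V) (v : V) : Prop :=
  G.Connected ∧ ¬ (G.induce {u | u ≠ v}).Connected

/-- The line cut-vertex graph of `G`: vertices are the edges and cut-vertices of `G`;
two vertices are adjacent iff the corresponding edges share an endpoint, or one is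
an edge incident to the other, a cut-vertex. -/
def lineCutGraph (G : SimpleGraph V) :
    SimpleGraph (G.edgeSet ⊕ {v : V // IsCutVertex G v}) where
  Adj x y :=
    match x, y with
    | Sum.inl e, Sum.inl f => e ≠ f ∧ ∃ v, v ∈ (e : Sym2 V) ∧ v ∈ (f : Sym2 V)
    | Sum.inl e, Sum.inr c => (c : V) ∈ (e : Sym2 V)
    | Sum.inr c, Sum.inl e => (c : V) ∈ (e : Sym2 V)
    | Sum.inr _, Sum.inr _ => False
  symm := by
    constructor
    rintro (e | c) (f | d) h
    · exact ⟨Ne.symm h.1, h.2.choose, h.2.choose_spec.2, h.2.choose_spec.1⟩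
    · exact h
    · exact h
    · exact h
  loopless := by
    constructor
    rintro (e | c) h
    · exact h.1 rfl
    · exact h

end Zagreb

/-! Counting each edge from both of its ends, `2 M₂` summed over the edges of any graph `H` is
`∑ v, ∑ w ~_H v, d(v) d(w)`. Every `w ≠ v` is a neighbour of `v` in exactly one of `G` and `Gᶜ`,
so `2 (M₂ + M̄₂) = ∑ v, d(v) (2m - d(v)) = 4m² - M₁` by the handshake lemma. -/

namespace SimpleGraph

variable {V : Type*} [Fintype V] (H : SimpleGraph V) [DecidableRel H.Adj]
  {M : Type*} [AddCommMonoid M]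

theorem sum_dart_edge (g : Sym2 V → M) :
    ∑ d : H.Dart, g d.edge = 2 • ∑ e ∈ H.edgeFinset, g e := by
  rw [← sum_fiberwise_of_maps_to (g := Dart.edge) (t := H.edgeFinset) (by simp), smul_sum]
  refine sum_congr rfl fun e he => ?_
  rw [sum_congr rfl fun d hd => congrArg g (mem_filter.1 hd).2, sum_const,
    H.dart_edge_fiber_card e (mem_edgeFinset.1 he)]

theorem sum_dart_eq_sum_sum_neighborFinset (f : V → V → M) :
    ∑ d : H.Dart, f d.fst d.snd = ∑ v, ∑ w ∈ H.neighborFinset v, f v w := by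
  let e : (Σ v, H.neighborSet v) ≃ H.Dart :=
    { toFun := fun s => ⟨(s.1, s.2), s.2.2⟩, invFun := fun d => ⟨d.fst, d.snd, d.adj⟩ }
  rw [← e.sum_comp, Fintype.sum_sigma]
  exact sum_congr rfl fun v _ => (sum_subtype _ (fun w => mem_neighborFinset H v w) (f v)).symm

theorem two_nsmul_sum_edgeFinset_sym2_lift (f : V → V → M) (hf : ∀ v w, f v w = f w v) :
    2 • ∑ e ∈ H.edgeFinset, Sym2.lift ⟨f, hf⟩ e = ∑ v, ∑ w ∈ H.neighborFinset v, f v w := by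
  rw [← sum_dart_edge, ← sum_dart_eq_sum_sum_neighborFinset]
  rfl

theorem sum_neighborFinset_add_sum_neighborFinset_compl [DecidableEq V] (v : V) (F : V → M) :
    ∑ w ∈ H.neighborFinset v, F w + ∑ w ∈ Hᶜ.neighborFinset v, F w = ∑ w ∈ univ.erase v, F w := by
  rw [← sum_union]
  · congr 1
    ext w
    by_cases h : H.Adj v w
    · simp [h, h.ne']
    · simp [h, eq_comm]
  · rw [Finset.disjoint_left]
    simp only [mem_neighborFinset, compl_adj]
    exact fun w h h' => h'.2 h

end SimpleGraph

namespace Zagreb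

variable {V : Type*} [Fintype V] (G : SimpleGraph V)

theorem two_mul_M2_add_M2bar_add_M1 :
    2 * (M2 G + M2bar G) + M1 G = (2 * #G.edgeFinset) ^ 2 := by
  have hcomplete : 2 * (M2 G + M2bar G) =
      ∑ v, G.degree v * ∑ w ∈ univ.erase v, G.degree w := by
    rw [mul_add, M2, M2bar, ← smul_eq_mul, ← smul_eq_mul,
      G.two_nsmul_sum_edgeFinset_sym2_lift, Gᶜ.two_nsmul_sum_edgeFinset_sym2_lift,
      ← sum_add_distrib]
    refine sum_congr rfl fun v _ => ?_
    rw [← mul_sum, ← mul_sum, ← mul_add, G.sum_neighborFinset_add_sum_neighborFinset_compl]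
  rw [hcomplete, M1, ← sum_add_distrib, ← G.sum_degrees_eq_twice_card_edges, sq, sum_mul_sum]
  refine sum_congr rfl fun v _ => ?_
  rw [sq, ← mul_add, ← mul_sum, sum_erase_add _ _ (mem_univ v)]

end Zagreb

open Zagreb in
theorem stmt1 {V : Type*} [Fintype V] (G : SimpleGraph V) :
    (M2bar G : ℚ) =
      2 * (G.edgeFinset.card : ℚ) ^ 2 - (1 / 2) * (M1 G : ℚ) - (M2 G : ℚ) := by
  have h := congrArg (Nat.cast : ℕ → ℚ) (two_mul_M2_add_M2bar_add_M1 G)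
  push_cast at h
  linarith
end
end

section
/- Let k \geq 3, n - k \geq 1, and G = L(S(CS_{k,n-k})). Then the first Zagreb index of G is M_1(G) = n^3 + (6-3k)n^2 + (3k^2 - 12k + 13)n - k^3 + 6k^2 - 5k. -/
/-!
The edges of `S(G)` are the incidences `(v, e)` with `v ∈ e`. In the line graph, `(v, e)` meets
the `d(v) - 1` other incidences at `v` and the one other incidence of `e`, so it has degree
`d(v)`; as `v` lies on `d(v)` such edges, `M₁(L(S(G))) = ∑ d(v)³`. The cycle-star has one
vertex of degree `n - k + 2`, `k - 1` vertices of degree `2` and `n - k` leaves.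
-/

open scoped Classical
open Finset

noncomputable section

namespace Zagreb

open SimpleGraph

lemma degree_eq_card_inl_add_card_inr {α β : Type*} [Fintype α] [Fintype β]
    (G : SimpleGraph (α ⊕ β)) (x : α ⊕ β) :
    G.degree x = #{a | G.Adj x (.inl a)} + #{b | G.Adj x (.inr b)} := by
  simp only [← card_neighborFinset_eq_degree, neighborFinset_eq_filter, card_filter,
    Fintype.sum_sum_type]

variable {V : Type*}

section subdivision

variable (G : SimpleGraph V) (v w : V) (e f : G.edgeSet)

@[simp] lemma subdivision_adj_inl_inl : ¬(subdivision G).Adj (.inl v) (.inl w) := id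
@[simp] lemma subdivision_adj_inr_inr : ¬(subdivision G).Adj (.inr e) (.inr f) := id
@[simp] lemma subdivision_adj_inl_inr :
    (subdivision G).Adj (.inl v) (.inr e) ↔ v ∈ (e : Sym2 V) := Iff.rfl
@[simp] lemma subdivision_adj_inr_inl :
    (subdivision G).Adj (.inr e) (.inl v) ↔ v ∈ (e : Sym2 V) := Iff.rfl

end subdivision

def subdivisionEdgeEquiv (G : SimpleGraph V) :
    (Σ v : V, {e : G.edgeSet // v ∈ (e : Sym2 V)}) ≃ (subdivision G).edgeSet :=
  Equiv.ofBijective (fun p => ⟨s(.inl p.1, .inr p.2.1), p.2.2⟩) <| by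
    refine ⟨?_, ?_⟩
    · rintro ⟨v, e, he⟩ ⟨w, f, hf⟩ h
      have h' := congrArg Subtype.val h
      simp only [Sym2.eq_iff, Sum.inl.injEq, Sum.inr.injEq, reduceCtorEq, false_and, or_false] at h'
      obtain ⟨rfl, rfl⟩ := h'
      rfl
    · rintro ⟨x, hx⟩
      induction x using Sym2.ind with
      | h x y =>
        rw [mem_edgeSet] at hx
        rcases x with v | e <;> rcases y with w | f
        · exact (subdivision_adj_inl_inl G v w hx).elim
        · exact ⟨⟨v, f, hx⟩, rfl⟩
        · exact ⟨⟨w, e, hx⟩, Subtype.ext Sym2.eq_swap⟩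
        · exact (subdivision_adj_inr_inr G e f hx).elim

variable [Fintype V]

lemma card_edgeSet_mem_eq_degree (G : SimpleGraph V) (v : V) :
    Fintype.card {e : G.edgeSet // v ∈ (e : Sym2 V)} = G.degree v := by
  rw [← card_incidenceSet_eq_degree]
  exact Fintype.card_congr (Equiv.subtypeSubtypeEquivSubtypeInter (· ∈ G.edgeSet) (v ∈ ·))

lemma subdivision_degree_inl (G : SimpleGraph V) (v : V) :
    (subdivision G).degree (.inl v) = G.degree v := by
  rw [degree_eq_card_inl_add_card_inr, ← card_edgeSet_mem_eq_degree, Fintype.card_subtype]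
  simp only [subdivision_adj_inl_inl, filter_false, card_empty, subdivision_adj_inl_inr, zero_add]

lemma subdivision_degree_inr (G : SimpleGraph V) (e : G.edgeSet) :
    (subdivision G).degree (.inr e) = 2 := by
  rw [degree_eq_card_inl_add_card_inr,
    ← Sym2.card_toFinset_of_not_isDiag _ (G.not_isDiag_of_mem_edgeSet e.2)]
  simp only [subdivision_adj_inr_inl, ← Sym2.mem_toFinset, subset_univ, filter_mem_eq_of_subset,
    subdivision_adj_inr_inr, filter_false, card_empty, add_zero]

lemma lineGraph_degree_add_two {H : SimpleGraph V} {a b : V} (f : H.edgeSet)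
    (hf : (f : Sym2 V) = s(a, b)) :
    (lineGraph H).degree f + 2 = H.degree a + H.degree b := by
  have hadj : H.Adj a b := by rw [← mem_edgeSet, ← hf]; exact f.2
  have hinter : H.incidenceFinset a ∩ H.incidenceFinset b = {s(a, b)} := by
    rw [← coe_inj]; push_cast [coe_incidenceFinset]
    exact H.incidenceSet_inter_incidenceSet_of_adj hadj
  have hnbr : ((lineGraph H).neighborFinset f).map (Function.Embedding.subtype _) =
      (H.incidenceFinset a ∪ H.incidenceFinset b).erase s(a, b) := by
    ext e
    simp only [mem_map, mem_neighborFinset, Function.Embedding.coe_subtype, mem_erase, mem_union,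
      mem_incidenceFinset]
    constructor
    · rintro ⟨e, ⟨hne, v, hvf, hve⟩, rfl⟩
      refine ⟨fun h => hne (Subtype.ext (hf.trans h.symm)), ?_⟩
      rw [hf, Sym2.mem_iff] at hvf
      rcases hvf with rfl | rfl
      exacts [.inl ⟨e.2, hve⟩, .inr ⟨e.2, hve⟩]
    · rintro ⟨hne, hinc⟩
      have he : e ∈ H.edgeSet := hinc.elim (·.1) (·.1)
      refine ⟨⟨e, he⟩, ⟨fun h => hne (by rw [← hf, h]), ?_⟩, rfl⟩
      rcases hinc with ⟨-, hae⟩ | ⟨-, hbe⟩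
      exacts [⟨a, hf ▸ Sym2.mem_mk_left a b, hae⟩, ⟨b, hf ▸ Sym2.mem_mk_right a b, hbe⟩]
  have hmem : s(a, b) ∈ H.incidenceFinset a ∪ H.incidenceFinset b := by
    simp [mem_incidenceFinset, hadj]
  rw [← card_neighborFinset_eq_degree, ← card_map, hnbr, card_erase_of_mem hmem,
    ← card_incidenceFinset_eq_degree, ← card_incidenceFinset_eq_degree,
    ← card_union_add_card_inter, hinter, card_singleton]
  have := card_pos.2 ⟨_, hmem⟩
  omega

lemma lineGraph_subdivision_degree (G : SimpleGraph V)
    (p : Σ v : V, {e : G.edgeSet // v ∈ (e : Sym2 V)}) :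
    (lineGraph (subdivision G)).degree (subdivisionEdgeEquiv G p) = G.degree p.1 := by
  have h := lineGraph_degree_add_two (subdivisionEdgeEquiv G p) rfl
  rw [subdivision_degree_inl, subdivision_degree_inr] at h
  omega

theorem M1_lineGraph_subdivision (G : SimpleGraph V) :
    M1 (lineGraph (subdivision G)) = ∑ v, G.degree v ^ 3 := by
  calc M1 (lineGraph (subdivision G))
      = ∑ p, (lineGraph (subdivision G)).degree (subdivisionEdgeEquiv G p) ^ 2 :=
        (Equiv.sum_comp _ _).symm
    _ = ∑ p : Σ v : V, {e : G.edgeSet // v ∈ (e : Sym2 V)}, G.degree p.1 ^ 2 := by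
        simp only [lineGraph_subdivision_degree]
    _ = ∑ v, ∑ _e : {e : G.edgeSet // v ∈ (e : Sym2 V)}, G.degree v ^ 2 := Fintype.sum_sigma _
    _ = ∑ v, G.degree v ^ 3 := by
        simp only [sum_const, card_univ, card_edgeSet_mem_eq_degree, smul_eq_mul, ← pow_succ']

section cycleStar

variable {k l : ℕ}

@[simp] lemma cycleStar_adj_inl_inl (i j : Fin k) :
    (cycleStar k l).Adj (.inl i) (.inl j) ↔ (cycleGraph k).Adj i j := by
  rcases k with _ | _ | m
  · exact i.elim0
  · exact ⟨fun h => (h.1 (Subsingleton.elim (α := Fin 1) i j)).elim,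
      fun h => (cycleGraph_one_adj h).elim⟩
  · have key : ∀ x y : Fin (m + 2), (x.val + 1) % (m + 2) = y.val ↔ y - x = 1 := by
      intro x y
      rw [sub_eq_iff_eq_add', Fin.ext_iff, Fin.val_add, Fin.val_one, eq_comm]
    change i ≠ j ∧ _ ↔ _
    rw [cycleGraph_adj, key, key, or_comm, and_iff_right_iff_imp]
    rintro (h | h) rfl <;> simp at h

@[simp] lemma cycleStar_adj_inl_inr (i : Fin k) (a : Fin l) :
    (cycleStar k l).Adj (.inl i) (.inr a) ↔ i.val = 0 := Iff.rfl
@[simp] lemma cycleStar_adj_inr_inl (i : Fin k) (a : Fin l) :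
    (cycleStar k l).Adj (.inr a) (.inl i) ↔ i.val = 0 := Iff.rfl
@[simp] lemma cycleStar_adj_inr_inr (a b : Fin l) : ¬(cycleStar k l).Adj (.inr a) (.inr b) := id

lemma cycleStar_degree_inl (hk : 3 ≤ k) (i : Fin k) :
    (cycleStar k l).degree (.inl i) = if i.val = 0 then l + 2 else 2 := by
  obtain ⟨m, rfl⟩ : ∃ m, k = m + 3 := ⟨k - 3, by omega⟩
  rw [degree_eq_card_inl_add_card_inr]
  simp only [cycleStar_adj_inl_inl, cycleStar_adj_inl_inr]
  rw [← neighborFinset_eq_filter, card_neighborFinset_eq_degree, cycleGraph_degree_three_le,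
    filter_const]
  split_ifs <;> simp [add_comm]

lemma cycleStar_degree_inr (hk : 0 < k) (a : Fin l) : (cycleStar k l).degree (.inr a) = 1 := by
  obtain ⟨m, rfl⟩ : ∃ m, k = m + 1 := ⟨k - 1, by omega⟩
  rw [degree_eq_card_inl_add_card_inr]
  simp [Fin.val_eq_zero_iff, filter_eq']

lemma sum_cycleStar_degree_pow_three (hk : 3 ≤ k) :
    ∑ v, (cycleStar k l).degree v ^ 3 = (l + 2) ^ 3 + 8 * (k - 1) + l := by
  obtain ⟨m, rfl⟩ : ∃ m, k = m + 1 := ⟨k - 1, by omega⟩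
  simp [Fintype.sum_sum_type, Fin.sum_univ_succ, cycleStar_degree_inl hk, cycleStar_degree_inr]
  ring

end cycleStar

end Zagreb

open Zagreb in
theorem stmt6 (n k : ℕ) (hk : 3 ≤ k) (hn : k + 1 ≤ n) :
    (M1 (lineGraph (subdivision (cycleStar k (n - k)))) : ℤ) =
      (n : ℤ) ^ 3 + (6 - 3 * k) * n ^ 2 + (3 * k ^ 2 - 12 * k + 13) * n
        - k ^ 3 + 6 * k ^ 2 - 5 * k := by
  obtain ⟨l, rfl⟩ : ∃ l, n = k + l := ⟨n - k, by omega⟩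
  rw [Nat.add_sub_cancel_left, M1_lineGraph_subdivision, sum_cycleStar_degree_pow_three hk]
  push_cast [Nat.cast_sub (by omega : 1 ≤ k)]
  ring
end
end
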